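/- arXiv:math/0701626 — 5 statements merged into one kernel-verified Lean document; each statement's English description precedes it below -/
import Mathlib

section
/- For each real number y in ℝⁿ, the polynomial R₄(x) = (x,y)⁴ − (6/(4+n))·(x,y)²‖x‖²‖y‖² + (3/(8+6n+n²))·‖x‖⁴‖y‖⁴ in the variables x = (x₁,…,xₙ) is harmonic, i.e. ΔR₄ = 0 where Δ = Σᵢ ∂²/∂xᵢ². -/
open MvPolynomial

/-- The scalar product polynomial `(x,y) = Σᵢ yᵢ xᵢ` as a polynomial in `x`. -/
noncomputable def ipPoly {n : ℕ} (y : Fin n → ℝ) : MvPolynomial (Fin n) ℝ :=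
  ∑ i, C (y i) * X i

/-- The squared norm polynomial `‖x‖² = Σᵢ xᵢ²`. -/
noncomputable def normSqPoly (n : ℕ) : MvPolynomial (Fin n) ℝ := ∑ i, X i ^ 2

/-- The Euclidean Laplacian `Δ = Σᵢ ∂²/∂xᵢ²` on polynomials. -/
noncomputable def laplacian {n : ℕ} (P : MvPolynomial (Fin n) ℝ) :
    MvPolynomial (Fin n) ℝ :=
  ∑ i, pderiv i (pderiv i P)

lemma pd_ip {n : ℕ} (y : Fin n → ℝ) (i : Fin n) : pderiv i (ipPoly y) = C (y i) := by
  simp [ipPoly, pderiv_C_mul, Finset.sum_eq_single i, Pi.single_apply]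

lemma pd_ns {n : ℕ} (i : Fin n) : pderiv i (normSqPoly n) = 2 * X i := by
  simp only [normSqPoly, map_sum, pderiv_pow, Pi.single_apply, pderiv_X,
    Nat.cast_ofNat, pow_one, mul_ite, mul_one, mul_zero]
  rw [Finset.sum_ite_eq']
  simp

lemma pd_ofNat {n : ℕ} (i : Fin n) (m : ℕ) [m.AtLeastTwo] :
    pderiv i (no_index (OfNat.ofNat m) : MvPolynomial (Fin n) ℝ) = 0 := by
  have : (OfNat.ofNat m : MvPolynomial (Fin n) ℝ) = C (OfNat.ofNat m) := (map_ofNat C m).symm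
  rw [this, pderiv_C]

lemma sum_C_sq {n : ℕ} (y : Fin n → ℝ) :
    (∑ i, C (y i) * C (y i) : MvPolynomial (Fin n) ℝ) = C (∑ i, y i ^ 2) := by
  rw [map_sum]; exact Finset.sum_congr rfl fun i _ => by rw [← map_mul]; ring_nf

lemma natCast_eq_C {n : ℕ} :
    ((n : ℕ) : MvPolynomial (Fin n) ℝ) = C (n : ℝ) := by simp

lemma lap_pow4 {n : ℕ} (y : Fin n → ℝ) :
    laplacian (ipPoly y ^ 4) = C (12 * ∑ i, y i ^ 2) * ipPoly y ^ 2 := by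
  unfold laplacian
  have h : ∀ i : Fin n, pderiv i (pderiv i (ipPoly y ^ 4))
      = 12 * (C (y i) * C (y i)) * ipPoly y ^ 2 := by
    intro i
    simp [pderiv_pow, pderiv_mul, pd_ip, pderiv_C, pd_ofNat]
    ring
  simp only [h, ← Finset.sum_mul, ← Finset.mul_sum, sum_C_sq, map_mul, map_ofNat]

lemma lap_mid {n : ℕ} (y : Fin n → ℝ) :
    laplacian (ipPoly y ^ 2 * normSqPoly n)
      = C (2 * ∑ i, y i ^ 2) * normSqPoly n + (8 + 2 * C (n : ℝ)) * ipPoly y ^ 2 := by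
  unfold laplacian
  have h : ∀ i : Fin n, pderiv i (pderiv i (ipPoly y ^ 2 * normSqPoly n))
      = 2 * (C (y i) * C (y i)) * normSqPoly n
        + 8 * ipPoly y * (C (y i) * X i) + 2 * ipPoly y ^ 2 := by
    intro i
    simp [pderiv_pow, pderiv_mul, pd_ip, pd_ns, pderiv_C, pd_ofNat]
    ring
  simp only [h, Finset.sum_add_distrib, ← Finset.sum_mul, ← Finset.mul_sum, sum_C_sq]
  rw [show (∑ i, C (y i) * X i : MvPolynomial (Fin n) ℝ) = ipPoly y from rfl,
    Finset.sum_const, Finset.card_univ, Fintype.card_fin, nsmul_eq_mul, natCast_eq_C,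
    map_mul, map_ofNat]
  ring

lemma lap_q2 (n : ℕ) :
    laplacian ((normSqPoly n) ^ 2) = (8 + 4 * C (n : ℝ)) * normSqPoly n := by
  unfold laplacian
  have h : ∀ i : Fin n, pderiv i (pderiv i ((normSqPoly n) ^ 2))
      = 8 * X i ^ 2 + 4 * normSqPoly n := by
    intro i
    simp [pderiv_pow, pderiv_mul, pd_ns, pd_ofNat]
    ring
  simp only [h, Finset.sum_add_distrib, ← Finset.mul_sum]
  rw [show (∑ i, X i ^ 2 : MvPolynomial (Fin n) ℝ) = normSqPoly n from rfl,
    Finset.sum_const, Finset.card_univ, Fintype.card_fin, nsmul_eq_mul, natCast_eq_C]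
  ring

lemma lap_add {n : ℕ} (p q : MvPolynomial (Fin n) ℝ) :
    laplacian (p + q) = laplacian p + laplacian q := by
  simp [laplacian, Finset.sum_add_distrib]

lemma lap_sub {n : ℕ} (p q : MvPolynomial (Fin n) ℝ) :
    laplacian (p - q) = laplacian p - laplacian q := by
  simp [laplacian, Finset.sum_sub_distrib]

lemma lap_Cmul {n : ℕ} (c : ℝ) (p : MvPolynomial (Fin n) ℝ) :
    laplacian (C c * p) = C c * laplacian p := by
  simp [laplacian, pderiv_C_mul, Finset.mul_sum]

/-- For each `y ∈ ℝⁿ`, the polynomial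
`R₄(x) = (x,y)⁴ − (6/(4+n))(x,y)²‖x‖²‖y‖² + (3/(8+6n+n²))‖x‖⁴‖y‖⁴` is harmonic. -/
theorem stmt_3 (n : ℕ) (hn : 1 ≤ n) (y : Fin n → ℝ) :
    laplacian
      ((ipPoly y) ^ 4
        - C (6 / (4 + (n : ℝ))) * (ipPoly y) ^ 2 * normSqPoly n * C (∑ i, (y i) ^ 2)
        + C (3 / (8 + 6 * (n : ℝ) + (n : ℝ) ^ 2)) * (normSqPoly n) ^ 2
            * C ((∑ i, (y i) ^ 2) ^ 2)) = 0 := by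
  set a : ℝ := ∑ i, (y i) ^ 2 with ha
  have h1 : (4 + (n : ℝ)) ≠ 0 := by positivity
  have h2 : (8 + 6 * (n : ℝ) + (n : ℝ) ^ 2) ≠ 0 := by positivity
  rw [show (C (6 / (4 + (n:ℝ))) * (ipPoly y) ^ 2 * normSqPoly n * C a : MvPolynomial (Fin n) ℝ)
      = C (6 / (4 + (n:ℝ)) * a) * ((ipPoly y) ^ 2 * normSqPoly n) by rw [map_mul]; ring,
    show (C (3 / (8 + 6*(n:ℝ) + (n:ℝ)^2)) * (normSqPoly n) ^ 2 * C (a^2) : MvPolynomial (Fin n) ℝ)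
      = C (3 / (8 + 6*(n:ℝ) + (n:ℝ)^2) * a^2) * ((normSqPoly n) ^ 2) by rw [map_mul]; ring,
    lap_add, lap_sub, lap_Cmul, lap_Cmul, lap_pow4, lap_mid, lap_q2]
  have e1 : (12 * a : ℝ) - 6 / (4 + (n:ℝ)) * a * (8 + 2 * (n:ℝ)) = 0 := by
    field_simp; ring
  have e2 : (-(6 / (4 + (n:ℝ)) * a * (2 * a)) + 3 / (8 + 6*(n:ℝ) + (n:ℝ)^2) * a^2 * (8 + 4*(n:ℝ)) : ℝ) = 0 := by
    field_simp; ring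
  have expand : (C (12 * a) * ipPoly y ^ 2
      - C (6 / (4 + (n:ℝ)) * a) * (C (2 * a) * normSqPoly n + (8 + 2 * C (n:ℝ)) * ipPoly y ^ 2)
      + C (3 / (8 + 6*(n:ℝ) + (n:ℝ)^2) * a^2) * ((8 + 4 * C (n:ℝ)) * normSqPoly n)
      : MvPolynomial (Fin n) ℝ)
      = C ((12 * a) - 6 / (4 + (n:ℝ)) * a * (8 + 2 * (n:ℝ))) * ipPoly y ^ 2
        + C (-(6 / (4 + (n:ℝ)) * a * (2 * a)) + 3 / (8 + 6*(n:ℝ) + (n:ℝ)^2) * a^2 * (8 + 4*(n:ℝ))) * normSqPoly n := by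
    simp only [map_add, map_mul, map_sub, map_neg, map_ofNat]
    ring
  rw [expand, e1, e2]
  simp
end

section
/- Let Φ ⊂ ℝⁿ be a finite set invariant under negation (x ∈ Φ implies −x ∈ Φ), with all elements of squared norm 2, and let y ∈ Φ. Suppose |Φ| = nh and the number of α ∈ Φ with (y,α) = 1 equals 2h − 4, the number with (y,α) = 2 equals 1, and (y,α) ∈ {0, ±1, ±2} for all α ∈ Φ. Then Σ_{α∈Φ} R₄(α) = 4(h(n−10) + 6(n+2))/(n+2), where R₄(x) = (x,y)⁴ − (6/(4+n))(x,y)²‖x‖²‖y‖² + (3/(8+6n+n²))‖x‖⁴‖y‖⁴. -/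
/-- The dot product on `Fin n → ℝ`. -/
def dotR {n : ℕ} (x y : Fin n → ℝ) : ℝ := ∑ i, x i * y i

lemma dotR_comm {n : ℕ} (x y : Fin n → ℝ) : dotR x y = dotR y x := by
  simp [dotR, mul_comm]

lemma dotR_neg {n : ℕ} (x y : Fin n → ℝ) : dotR x (-y) = -dotR x y := by
  simp [dotR, mul_neg, Finset.sum_neg_distrib]

lemma card_neg_filter {n : ℕ} (Φ : Finset (Fin n → ℝ)) (y : Fin n → ℝ)
    (hneg : ∀ α ∈ Φ, -α ∈ Φ) (c : ℝ) :
    (Φ.filter (fun α => dotR y α = -c)).card = (Φ.filter (fun α => dotR y α = c)).card := by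
  apply Finset.card_bij' (fun α _ => -α) (fun α _ => -α)
  · intro a ha; simp
  · intro a ha; simp
  · intro a ha
    simp only [Finset.mem_filter] at ha ⊢
    exact ⟨hneg a ha.1, by rw [dotR_neg, ha.2, neg_neg]⟩
  · intro a ha
    simp only [Finset.mem_filter] at ha ⊢
    exact ⟨hneg a ha.1, by rw [dotR_neg, ha.2]⟩

/-- Sum of the degree-4 harmonic polynomial `R₄` over a simply-laced root system
of rank `n` and Coxeter number `h`, normalized so all roots have squared norm 2. -/
theorem stmt_5 (n h : ℕ) (hh : 2 ≤ h) (Φ : Finset (Fin n → ℝ)) (y : Fin n → ℝ)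
    (hneg : ∀ α ∈ Φ, -α ∈ Φ)
    (hnorm : ∀ α ∈ Φ, dotR α α = 2)
    (hy : y ∈ Φ)
    (hcard : Φ.card = n * h)
    (h1 : (Φ.filter (fun α => dotR y α = 1)).card = 2 * h - 4)
    (h2 : (Φ.filter (fun α => dotR y α = 2)).card = 1)
    (hvals : ∀ α ∈ Φ, dotR y α = 0 ∨ dotR y α = 1 ∨ dotR y α = -1 ∨
      dotR y α = 2 ∨ dotR y α = -2) :
    ∑ α ∈ Φ,
      ((dotR α y) ^ 4
        - 6 / (4 + (n : ℝ)) * (dotR α y) ^ 2 * (dotR α α) * (dotR y y)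
        + 3 / (8 + 6 * (n : ℝ) + (n : ℝ) ^ 2) * (dotR α α) ^ 2 * (dotR y y) ^ 2)
      = 4 * ((h : ℝ) * ((n : ℝ) - 10) + 6 * ((n : ℝ) + 2)) / ((n : ℝ) + 2) := by
  have hn4 : (4 + (n : ℝ)) ≠ 0 := by positivity
  have hn2 : ((n : ℝ) + 2) ≠ 0 := by positivity
  have hnq : (8 + 6 * (n : ℝ) + (n : ℝ) ^ 2) ≠ 0 := by positivity
  have hyy : dotR y y = 2 := hnorm y hy
  set c0 : ℝ := 48 / (8 + 6 * (n : ℝ) + (n : ℝ) ^ 2) with hc0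
  set d1 : ℝ := 1 - 24 / (4 + (n : ℝ)) with hd1
  set d2 : ℝ := 16 - 96 / (4 + (n : ℝ)) with hd2
  have key : ∀ α ∈ Φ,
      ((dotR α y) ^ 4
        - 6 / (4 + (n : ℝ)) * (dotR α y) ^ 2 * (dotR α α) * (dotR y y)
        + 3 / (8 + 6 * (n : ℝ) + (n : ℝ) ^ 2) * (dotR α α) ^ 2 * (dotR y y) ^ 2)
      = c0 + ((if dotR y α = 1 then d1 else 0) + (if dotR y α = -1 then d1 else 0)
          + (if dotR y α = 2 then d2 else 0) + (if dotR y α = -2 then d2 else 0)) := by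
    intro α hα
    rw [dotR_comm α y, hnorm α hα, hyy, hc0, hd1, hd2]
    rcases hvals α hα with hv | hv | hv | hv | hv <;> rw [hv] <;> norm_num <;>
      field_simp <;> ring
  rw [Finset.sum_congr rfl key]
  rw [Finset.sum_add_distrib, Finset.sum_const]
  simp only [Finset.sum_add_distrib, ← Finset.sum_filter, Finset.sum_const]
  have hm1 : (Φ.filter (fun α => dotR y α = -1)).card = 2 * h - 4 := by
    rw [show (-1 : ℝ) = -(1) by norm_num] at *
    rw [card_neg_filter Φ y hneg 1, h1]
  have hm2 : (Φ.filter (fun α => dotR y α = -2)).card = 1 := by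
    rw [show (-2 : ℝ) = -(2) by norm_num] at *
    rw [card_neg_filter Φ y hneg 2, h2]
  rw [h1, h2, hm1, hm2, hcard]
  have h4le : 4 ≤ 2 * h := by omega
  rw [hc0, hd1, hd2]
  simp only [nsmul_eq_mul, one_smul]
  push_cast [Nat.cast_sub h4le]
  field_simp
  ring
end

section
/- The polynomial equation (c − 24h + 12)·(10c³ + (141 − 615h)c² + 2(5740h² − 3321h + 171)c − 24(2870h³ − 2870h² + 451h + 15)) = 0, specialized at h = 3/2, has c = 24 as its only rational solution. -/
/-- No integer root of the scaled cubic, by reduction mod 27. -/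
lemma no_int_root (y : ℤ) : y^3 - 1563*y^2 + 648360*y - 75268800 ≠ 0 := by
  intro h
  have h27 : ((y : ZMod 27)^3 - 1563*(y : ZMod 27)^2 + 648360*(y : ZMod 27) - 75268800) = 0 := by
    have := congrArg (Int.cast : ℤ → ZMod 27) h
    push_cast at this
    exact this
  have : ∀ z : ZMod 27, z^3 - 1563*z^2 + 648360*z - 75268800 ≠ 0 := by decide
  exact this _ h27

/-- No rational root of the scaled cubic. -/
lemma no_rat_root (y : ℚ) : y^3 - 1563*y^2 + 648360*y - 75268800 ≠ 0 := by
  intro h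
  set n : ℤ := y.num with hn
  set d : ℤ := (y.den : ℤ) with hd
  have hd0 : (d : ℚ) ≠ 0 := by
    simp [hd, y.den_nz]
  have hnq : (n : ℚ) = y * d := by
    rw [hn, hd]
    exact_mod_cast (Rat.mul_den_eq_num y).symm
  have key : n^3 - 1563*n^2*d + 648360*n*d^2 - 75268800*d^3 = 0 := by
    have : ((n^3 - 1563*n^2*d + 648360*n*d^2 - 75268800*d^3 : ℤ) : ℚ) = 0 := by
      push_cast
      rw [hnq]
      linear_combination (d:ℚ)^3 * h
    exact_mod_cast this
  have hdvd : d ∣ n^3 := by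
    refine ⟨1563*n^2 - 648360*n*d + 75268800*d^2, ?_⟩
    linarith [key]
  have hcop : IsCoprime n d := by
    rw [hn, hd, Int.isCoprime_iff_gcd_eq_one]
    exact y.reduced
  have hd1 : IsUnit d := (hcop.symm.pow_right).isUnit_of_dvd hdvd
  have hdpos : 0 < d := by rw [hd]; exact_mod_cast y.pos
  have hdone : d = 1 := by
    rcases Int.isUnit_iff.mp (hd1) with h1 | h1 <;> omega
  rw [hdone] at key
  exact no_int_root n (by linarith [key])

/-- The determinant polynomial equation specialized at `h = 3/2` has `c = 24` as
its only rational solution. -/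
theorem stmt_12 (c : ℚ) :
    (c - 24 * (3/2) + 12) *
      (10 * c ^ 3 + (141 - 615 * (3/2)) * c ^ 2
        + 2 * (5740 * (3/2) ^ 2 - 3321 * (3/2) + 171) * c
        - 24 * (2870 * (3/2) ^ 3 - 2870 * (3/2) ^ 2 + 451 * (3/2) + 15)) = 0
    ↔ c = 24 := by
  constructor
  · intro h
    rcases mul_eq_zero.mp h with h1 | h2
    · linarith
    · exfalso
      apply no_rat_root (20 * c)
      linear_combination 800 * h2
  · intro h; subst h; norm_num
end

section
/- The system of two equations d = c(2388 + 955c + 70c²)/(2(748 − 55c + c²)) and d = 15c(155c³ + 4133c² + 32074c + 88392)/(20c³ − 2178c² + 65956c − 595056) in real numbers c, d has exactly the solutions with c ∈ {−516/13, −44/5, −22/5, 0, 24, 142/5}; among these, c = 24 gives d = 196884 and c = 142/5 gives d = −164081. -/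
/-- The system `d = c(2388+955c+70c²)/(2(748−55c+c²))` and
`d = 15c(155c³+4133c²+32074c+88392)/(20c³−2178c²+65956c−595056)` has exactly the
solutions with `c ∈ {−516/13, −44/5, −22/5, 0, 24, 142/5}` (and `d` given by the
first formula); moreover `c = 24` gives `d = 196884` and `c = 142/5` gives
`d = −164081`. -/
theorem stmt_13 :
    (∀ c d : ℝ, 748 - 55 * c + c ^ 2 ≠ 0 →
      20 * c ^ 3 - 2178 * c ^ 2 + 65956 * c - 595056 ≠ 0 →
      ((d = c * (2388 + 955 * c + 70 * c ^ 2) / (2 * (748 - 55 * c + c ^ 2)) ∧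
        d = 15 * c * (155 * c ^ 3 + 4133 * c ^ 2 + 32074 * c + 88392) /
          (20 * c ^ 3 - 2178 * c ^ 2 + 65956 * c - 595056))
      ↔ ((c = -516/13 ∨ c = -44/5 ∨ c = -22/5 ∨ c = 0 ∨ c = 24 ∨ c = 142/5) ∧
          d = c * (2388 + 955 * c + 70 * c ^ 2) / (2 * (748 - 55 * c + c ^ 2))))) ∧
    ((24 : ℝ) * (2388 + 955 * 24 + 70 * 24 ^ 2) / (2 * (748 - 55 * 24 + 24 ^ 2))
        = 196884) ∧
    ((142/5 : ℝ) * (2388 + 955 * (142/5) + 70 * (142/5) ^ 2) /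
        (2 * (748 - 55 * (142/5) + (142/5) ^ 2)) = -164081) := by
  refine ⟨?_, by norm_num, by norm_num⟩
  intro c d h1 h2
  constructor
  · rintro ⟨hd1, hd2⟩
    refine ⟨?_, hd1⟩
    have h1' : (2 : ℝ) * (748 - 55 * c + c ^ 2) ≠ 0 := by
      intro h; apply h1; linarith [h]
    have h := hd1.symm.trans hd2
    rw [div_eq_div_iff h1' h2] at h
    have hP : (-2 : ℝ) * c * (13 * c + 516) * (5 * c + 44) * (5 * c + 22) *
        (c - 24) * (5 * c - 142) = 0 := by linear_combination h
    have := mul_eq_zero.mp hP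
    rcases this with h' | h'
    · rcases mul_eq_zero.mp h' with h' | h'
      · rcases mul_eq_zero.mp h' with h' | h'
        · rcases mul_eq_zero.mp h' with h' | h'
          · rcases mul_eq_zero.mp h' with h' | h'
            · rcases mul_eq_zero.mp h' with h' | h'
              · norm_num at h'
              · right; right; right; left; exact h'
            · left; linarith
          · right; left; linarith
        · right; right; left; linarith
      · right; right; right; right; left; linarith
    · right; right; right; right; right; linarith
  · rintro ⟨hc, hd⟩
    refine ⟨hd, ?_⟩
    rw [hd]
    rcases hc with h | h | h | h | h | h <;> subst h <;> norm_num
end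

section
/- Let Φ = Φ₁ ∪ Φ₂ be a disjoint union of two finite subsets of ℝⁿ (n ≥ 2) with Φ₁ spanning a nonzero subspace orthogonal to the span of Φ₂, and suppose Φ₁ ∪ Φ₂ ≠ ∅ and each Φᵢ spans the corresponding subspace whenever nonempty. Choose unit vectors h¹ in the span of Φ₁'s ambient component and h² in Φ₂'s component (orthogonal to each other). Then for Q(x₁,…,xₙ) = x₁⁴ − 6x₁²x₂² + x₂⁴ (a harmonic polynomial), Σ_{α∈Φ} Q((α,h¹), (α,h²), …) = Σ_{α∈Φ₁}(α,h¹)⁴ + Σ_{α∈Φ₂}(α,h²)⁴ > 0. -/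
/-- Hurley's lemma: for a root system `Φ = Φ₁ ∪ Φ₂` splitting into two orthogonal
nonempty-spanning families, the sum of `Q(x₁,x₂) = x₁⁴ − 6x₁²x₂² + x₂⁴` evaluated
at `((α,h¹),(α,h²))` collapses to `Σ_{Φ₁}(α,h¹)⁴ + Σ_{Φ₂}(α,h²)⁴ > 0`. -/
theorem stmt_18 (n : ℕ) (hn : 2 ≤ n) (Φ₁ Φ₂ : Finset (Fin n → ℝ))
    (h₁ h₂ : Fin n → ℝ)
    (hdisj : Disjoint Φ₁ Φ₂)
    (hne : (Φ₁ ∪ Φ₂).Nonempty)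
    (hu1 : dotR h₁ h₁ = 1) (hu2 : dotR h₂ h₂ = 1) (horth : dotR h₁ h₂ = 0)
    (hΦ₁ : ∀ α ∈ Φ₁, dotR α h₂ = 0)
    (hΦ₂ : ∀ α ∈ Φ₂, dotR α h₁ = 0)
    (hspan₁ : Φ₁.Nonempty → ∃ α ∈ Φ₁, dotR α h₁ ≠ 0)
    (hspan₂ : Φ₂.Nonempty → ∃ α ∈ Φ₂, dotR α h₂ ≠ 0) :
    (∑ α ∈ Φ₁ ∪ Φ₂,
        ((dotR α h₁) ^ 4 - 6 * (dotR α h₁) ^ 2 * (dotR α h₂) ^ 2 + (dotR α h₂) ^ 4)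
      = ∑ α ∈ Φ₁, (dotR α h₁) ^ 4 + ∑ α ∈ Φ₂, (dotR α h₂) ^ 4) ∧
    0 < ∑ α ∈ Φ₁, (dotR α h₁) ^ 4 + ∑ α ∈ Φ₂, (dotR α h₂) ^ 4 := by
  have hsum : ∑ α ∈ Φ₁ ∪ Φ₂,
      ((dotR α h₁) ^ 4 - 6 * (dotR α h₁) ^ 2 * (dotR α h₂) ^ 2 + (dotR α h₂) ^ 4)
      = ∑ α ∈ Φ₁, (dotR α h₁) ^ 4 + ∑ α ∈ Φ₂, (dotR α h₂) ^ 4 := by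
    rw [Finset.sum_union hdisj]
    congr 1
    · refine Finset.sum_congr rfl fun α hα => ?_
      rw [hΦ₁ α hα]; ring
    · refine Finset.sum_congr rfl fun α hα => ?_
      rw [hΦ₂ α hα]; ring
  refine ⟨hsum, ?_⟩
  have hnn1 : (0:ℝ) ≤ ∑ α ∈ Φ₁, (dotR α h₁) ^ 4 :=
    Finset.sum_nonneg fun α _ => by positivity
  have hnn2 : (0:ℝ) ≤ ∑ α ∈ Φ₂, (dotR α h₂) ^ 4 :=
    Finset.sum_nonneg fun α _ => by positivity
  obtain ⟨a, ha⟩ := hne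
  rcases Finset.mem_union.mp ha with h | h
  · obtain ⟨α, hα, hαne⟩ := hspan₁ ⟨a, h⟩
    have : 0 < ∑ α ∈ Φ₁, (dotR α h₁) ^ 4 :=
      Finset.sum_pos' (fun β _ => by positivity) ⟨α, hα, by positivity⟩
    linarith
  · obtain ⟨α, hα, hαne⟩ := hspan₂ ⟨a, h⟩
    have : 0 < ∑ α ∈ Φ₂, (dotR α h₂) ^ 4 :=
      Finset.sum_pos' (fun β _ => by positivity) ⟨α, hα, by positivity⟩
    linarith
end
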